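/- arXiv:0704.3304 — 4 statements merged into one kernel-verified Lean document; each statement's English description precedes it below -/
import Mathlib

section
/- For 0 < α ≤ 1 and 0 < λ ≤ (1-α)/(1+α), the function Q(s) = (1-(1-s)^α)/(1-λ(1-s)^α) on [0,1) extends to a power series in s with nonnegative coefficients, with Q(1) = 1 (i.e., Q is a probability generating function). -/
open MeasureTheory Set

/-- The characteristic function of a measure `μ` on `ℝ`. -/
noncomputable def cf (μ : Measure ℝ) (t : ℝ) : ℂ :=
  ∫ x, Complex.exp (t * x * Complex.I) ∂μ

/-- `φ` is the characteristic function of some probability distribution on `ℝ`. -/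
def IsCF (φ : ℝ → ℂ) : Prop :=
  ∃ μ : Measure ℝ, IsProbabilityMeasure μ ∧ φ = cf μ

/-- `φ` is the characteristic function of an infinitely divisible distribution on `ℝ`. -/
def IsIDCF (φ : ℝ → ℂ) : Prop :=
  ∀ n : ℕ, 0 < n → ∃ ψ : ℝ → ℂ, IsCF ψ ∧ ∀ t, φ t = ψ t ^ n

/-- `P` is the probability generating function of a distribution on `{0,1,2,...}`:
on `[0,1]` it is given by a power series with nonnegative coefficients summing to `1`. -/
def IsPGF (P : ℝ → ℝ) : Prop :=
  ∃ p : ℕ → ℝ, (∀ n, 0 ≤ p n) ∧ (∑' n, p n) = 1 ∧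
    ∀ s ∈ Icc (0:ℝ) 1, P s = ∑' n, p n * s ^ n

/-- `P` is the PGF of an infinitely divisible distribution on `{0,1,2,...}`:
for every `n ≥ 1`, its `n`-th root (on `[0,1]`) is again a PGF. -/
def IsIDPGF (P : ℝ → ℝ) : Prop :=
  ∀ n : ℕ, 0 < n → ∃ Q : ℝ → ℝ, IsPGF Q ∧ ∀ s ∈ Icc (0:ℝ) 1, P s = Q s ^ n

/-! The Taylor coefficients `g n` of `1 - (1 - s) ^ α` (the Sibuya distribution) are positive
for `n ≥ 1` and satisfy `(n + 1) g (n + 1) = (n - α) g n`, so they are log-convex; being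
nonnegative, they sum to the limit `1` of `1 - (1 - s) ^ α` as `s → 1⁻`. Hence
`D(s) = 1 - λ (1 - s) ^ α = (1 - λ) + λ ∑ g n s ^ n` has positive log-convex coefficients:
the only new inequality, `(λ α) ^ 2 ≤ (1 - λ) λ g 2`, is exactly `λ (1 + α) ≤ 1 - α`.
By Kaluza's theorem the coefficients of `1 / D` beyond the constant term are nonpositive, and
`λ Q = 1 - (1 - λ) / D` shows that those of `Q` are nonnegative. Comparing coefficients in
`Q D = G` bounds them by `g n / (1 - λ)`, so the power series of `Q` converges on `[0, 1]`,
where it sums to `G / D` by the Cauchy product. -/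

open Filter Topology PowerSeries

theorem hasSum_of_hasSum_mul_pow_of_tendsto {c : ℕ → ℝ} {f : ℝ → ℝ} {L : ℝ}
    (hc : ∀ n, 0 ≤ c n)
    (hf : ∀ s ∈ Ico (0 : ℝ) 1, HasSum (fun n => c n * s ^ n) (f s))
    (hL : Tendsto f (𝓝[<] 1) (𝓝 L)) : HasSum c L := by
  have hpartial (N : ℕ) : ∑ n ∈ Finset.range N, c n ≤ L := by
    have hlim : Tendsto (fun s : ℝ => ∑ n ∈ Finset.range N, c n * s ^ n) (𝓝[<] 1)
        (𝓝 (∑ n ∈ Finset.range N, c n)) := by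
      have hcont : Continuous fun s : ℝ => ∑ n ∈ Finset.range N, c n * s ^ n := by fun_prop
      simpa using (hcont.tendsto 1).mono_left nhdsWithin_le_nhds
    refine le_of_tendsto_of_tendsto hlim hL ?_
    filter_upwards [Ioo_mem_nhdsLT zero_lt_one] with s hs
    exact sum_le_hasSum _ (fun n _ => mul_nonneg (hc n) (pow_nonneg hs.1.le n))
      (hf s ⟨hs.1.le, hs.2⟩)
  have hsum : Summable c := summable_of_sum_range_le hc hpartial
  have hge : L ≤ ∑' n, c n := by
    refine le_of_tendsto hL ?_
    filter_upwards [Ioo_mem_nhdsLT zero_lt_one] with s hs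
    exact hasSum_le (fun n => mul_le_of_le_one_right (hc n) (pow_le_one₀ hs.1.le hs.2.le))
      (hf s ⟨hs.1.le, hs.2⟩) hsum.hasSum
  have h := hsum.hasSum
  rwa [le_antisymm (hsum.tsum_le_of_sum_range_le hpartial) hge] at h

theorem PowerSeries.tsum_coeff_mul_mul_pow {R : Type*} [NormedCommRing R] [CompleteSpace R]
    {f g : R⟦X⟧} {s : R} (hf : Summable fun n => ‖coeff n f * s ^ n‖)
    (hg : Summable fun n => ‖coeff n g * s ^ n‖) :
    ∑' n, coeff n (f * g) * s ^ n = (∑' n, coeff n f * s ^ n) * ∑' n, coeff n g * s ^ n := by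
  rw [tsum_mul_tsum_eq_tsum_sum_antidiagonal_of_summable_norm hf hg]
  refine tsum_congr fun n => ?_
  rw [coeff_mul, Finset.sum_mul]
  refine Finset.sum_congr rfl fun ij hij => ?_
  rw [← Finset.HasAntidiagonal.mem_antidiagonal.1 hij, pow_add]
  ring

theorem monotone_div_of_sq_le_mul {a : ℕ → ℝ} (ha : ∀ n, 0 < a n)
    (hlc : ∀ n, a (n + 1) ^ 2 ≤ a n * a (n + 2)) : Monotone fun n => a (n + 1) / a n :=
  monotone_nat_of_le_succ fun n => by
    rw [div_le_div_iff₀ (ha n) (ha (n + 1))]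
    nlinarith [hlc n]

theorem PowerSeries.coeff_inv_nonpos_of_sq_le_mul {φ : ℝ⟦X⟧} (hpos : ∀ n, 0 < coeff n φ)
    (hlc : ∀ n, coeff (n + 1) φ ^ 2 ≤ coeff n φ * coeff (n + 2) φ) {n : ℕ} (hn : n ≠ 0) :
    coeff n φ⁻¹ ≤ 0 := by
  have hφ0 : constantCoeff φ ≠ 0 := by
    rw [← coeff_zero_eq_constantCoeff_apply]; exact (hpos 0).ne'
  set a := fun n => coeff n φ
  set b := fun n => coeff n φ⁻¹
  have hconv (N : ℕ) (hN : N ≠ 0) : ∑ j ∈ Finset.range (N + 1), b j * a (N - j) = 0 := by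
    have := congrArg (coeff N) (PowerSeries.inv_mul_cancel φ hφ0)
    rwa [coeff_mul, Finset.Nat.sum_antidiagonal_eq_sum_range_succ_mk, coeff_one,
      if_neg hN] at this
  have hb0 : 0 < b 0 := by
    simpa [b, constantCoeff_inv] using hpos 0
  have hmono := monotone_div_of_sq_le_mul hpos hlc
  induction n using Nat.strong_induction_on with
  | _ N ih =>
  obtain ⟨M, rfl⟩ : ∃ M, N = M + 1 := Nat.exists_eq_succ_of_ne_zero hn
  have hlast : b (M + 1) * a 0 = -∑ j ∈ Finset.range (M + 1), b j * a (M + 1 - j) := by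
    have := hconv (M + 1) hn
    rw [Finset.sum_range_succ, Nat.sub_self] at this
    linarith
  suffices 0 ≤ ∑ j ∈ Finset.range (M + 1), b j * a (M + 1 - j) by nlinarith [hpos 0]
  rcases Nat.eq_zero_or_pos M with rfl | hM
  · simpa using (mul_pos hb0 (hpos 1)).le
  set r := a (M + 1) / a M
  -- `a (M + 1 - j) ≤ r * a (M - j)` because the ratios `a (k + 1) / a k` increase.
  have hterm : ∀ j ∈ Finset.range (M + 1), r * (b j * a (M - j)) ≤ b j * a (M + 1 - j) := by
    intro j hj
    have hjM := Finset.mem_range.1 hj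
    rcases Nat.eq_zero_or_pos j with rfl | hj0
    · simp only [r, Nat.sub_zero]
      rw [mul_left_comm, div_mul_cancel₀ _ (hpos M).ne']
    · have hbj : b j ≤ 0 := ih j (by omega) hj0.ne'
      have hratio : a (M - j + 1) ≤ r * a (M - j) :=
        (div_le_iff₀ (hpos _)).1 (hmono (Nat.sub_le M j))
      rw [show M + 1 - j = M - j + 1 by omega]
      nlinarith
  calc 0 = r * ∑ j ∈ Finset.range (M + 1), b j * a (M - j) := by
        rw [hconv M hM.ne', mul_zero]
    _ ≤ _ := by rw [Finset.mul_sum]; exact Finset.sum_le_sum hterm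

theorem Ring.succ_mul_choose_succ {R : Type*} [CommRing R] [BinomialRing R] (r : R) (n : ℕ) :
    ((n : R) + 1) * Ring.choose r (n + 1) = Ring.choose r n * (r - n) := by
  have h := Ring.choose_smul_choose r (Nat.le_succ n)
  rwa [Nat.choose_succ_self_right, Nat.succ_eq_add_one, Nat.add_sub_cancel_left,
    Ring.choose_one_right, nsmul_eq_mul, Nat.cast_succ] at h

noncomputable def sibuyaCoeff (α : ℝ) (n : ℕ) : ℝ :=
  if n = 0 then 0 else -(-1) ^ n * Ring.choose α n

section Sibuya

variable {α : ℝ}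

@[simp] theorem sibuyaCoeff_zero : sibuyaCoeff α 0 = 0 := rfl

theorem sibuyaCoeff_one : sibuyaCoeff α 1 = α := by simp [sibuyaCoeff]

theorem sibuyaCoeff_succ_succ (n : ℕ) :
    ((n : ℝ) + 2) * sibuyaCoeff α (n + 2) = ((n : ℝ) + 1 - α) * sibuyaCoeff α (n + 1) := by
  have h := Ring.succ_mul_choose_succ α (n + 1)
  simp only [sibuyaCoeff, Nat.add_eq_zero_iff, one_ne_zero, OfNat.ofNat_ne_zero, and_false,
    if_false, pow_succ]
  push_cast at h
  linear_combination (-(-1) ^ n : ℝ) * h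

theorem sibuyaCoeff_pos (hα0 : 0 < α) (hα1 : α < 1) (n : ℕ) : 0 < sibuyaCoeff α (n + 1) := by
  induction n with
  | zero => simpa [sibuyaCoeff_one] using hα0
  | succ n ih =>
    have h := sibuyaCoeff_succ_succ (α := α) n
    refine pos_of_mul_pos_right (h ▸ mul_pos ?_ ih) (by positivity : (0 : ℝ) ≤ n + 2)
    linarith [n.cast_nonneg (α := ℝ)]

theorem sibuyaCoeff_sq_le_mul (hα0 : 0 < α) (hα1 : α < 1) (n : ℕ) :
    sibuyaCoeff α (n + 2) ^ 2 ≤ sibuyaCoeff α (n + 1) * sibuyaCoeff α (n + 3) := by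
  have h₁ := sibuyaCoeff_succ_succ (α := α) n
  have h₂ := sibuyaCoeff_succ_succ (α := α) (n + 1)
  push_cast at h₂
  have hx := sibuyaCoeff_pos hα0 hα1 n
  have hy := sibuyaCoeff_pos hα0 hα1 (n + 1)
  have key : ((n : ℝ) + 2) * ((n : ℝ) + 3) *
      (sibuyaCoeff α (n + 1) * sibuyaCoeff α (n + 3) - sibuyaCoeff α (n + 2) ^ 2) =
      (1 + α) * sibuyaCoeff α (n + 1) * sibuyaCoeff α (n + 2) := by
    linear_combination ((n + 2) * sibuyaCoeff α (n + 1)) * h₂ -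
      ((n + 3) * sibuyaCoeff α (n + 2)) * h₁
  have : 0 ≤ sibuyaCoeff α (n + 1) * sibuyaCoeff α (n + 3) - sibuyaCoeff α (n + 2) ^ 2 := by
    refine (mul_nonneg_iff_of_pos_left (c := ((n : ℝ) + 2) * ((n : ℝ) + 3))
      (by positivity)).1 ?_
    rw [key]
    positivity
  linarith

theorem hasSum_sibuyaCoeff_mul_pow {s : ℝ} (hs : |s| < 1) :
    HasSum (fun n => sibuyaCoeff α n * s ^ n) (1 - (1 - s) ^ α) := by
  have hbin := Real.one_add_rpow_hasFPowerSeriesOnBall_zero (a := α).hasSum (y := -s)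
    (by simpa [enorm_eq_nnnorm, ← NNReal.coe_lt_coe] using hs)
  simp only [binomialSeries_apply, List.ofFn_const, List.prod_replicate, smul_eq_mul,
    zero_add] at hbin
  rw [← sub_eq_add_neg] at hbin
  refine ((hasSum_ite_eq 0 (1 : ℝ)).sub hbin).congr_fun fun n => ?_
  rcases n with _ | n
  · simp
  · simp [sibuyaCoeff, neg_pow s]; ring

theorem hasSum_sibuyaCoeff (hα0 : 0 < α) (hα1 : α < 1) : HasSum (sibuyaCoeff α) 1 := by
  refine hasSum_of_hasSum_mul_pow_of_tendsto ?_ (fun s hs => hasSum_sibuyaCoeff_mul_pow ?_) ?_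
  · rintro (_ | n)
    · rfl
    · exact (sibuyaCoeff_pos hα0 hα1 n).le
  · rw [abs_lt]; constructor <;> linarith [hs.1, hs.2]
  · have hcont : ContinuousAt (fun s : ℝ => 1 - (1 - s) ^ α) 1 :=
      continuousAt_const.sub
        ((continuousAt_const.sub continuousAt_id).rpow_const (Or.inr hα0.le))
    simpa [Real.zero_rpow hα0.ne'] using hcont.tendsto.mono_left nhdsWithin_le_nhds

theorem hasSum_sibuyaCoeff_mul_pow_of_mem_Icc (hα0 : 0 < α) (hα1 : α < 1) {s : ℝ}
    (hs : s ∈ Icc (0 : ℝ) 1) :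
    HasSum (fun n => sibuyaCoeff α n * s ^ n) (1 - (1 - s) ^ α) := by
  rcases hs.2.lt_or_eq with hs1 | rfl
  · exact hasSum_sibuyaCoeff_mul_pow (abs_lt.2 ⟨by linarith [hs.1], hs1⟩)
  · simpa [Real.zero_rpow hα0.ne'] using hasSum_sibuyaCoeff hα0 hα1

end Sibuya

noncomputable def sibuyaSeries (α : ℝ) : ℝ⟦X⟧ := mk (sibuyaCoeff α)

noncomputable def sibuyaDenom (α lam : ℝ) : ℝ⟦X⟧ := C (1 - lam) + lam • sibuyaSeries α

noncomputable def sibuyaQuotient (α lam : ℝ) : ℝ⟦X⟧ :=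
  sibuyaSeries α * (sibuyaDenom α lam)⁻¹

section Quotient

variable {α lam : ℝ}

theorem coeff_sibuyaDenom (n : ℕ) :
    coeff n (sibuyaDenom α lam) = if n = 0 then 1 - lam else lam * sibuyaCoeff α n := by
  rcases n with _ | n <;> simp [sibuyaDenom, sibuyaSeries]

theorem constantCoeff_sibuyaDenom : constantCoeff (sibuyaDenom α lam) = 1 - lam := by
  simpa using coeff_sibuyaDenom (α := α) (lam := lam) 0

theorem coeff_sibuyaDenom_pos (hα0 : 0 < α) (hα1 : α < 1) (hl0 : 0 < lam) (hl1 : lam < 1)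
    (n : ℕ) : 0 < coeff n (sibuyaDenom α lam) := by
  rcases n with _ | n
  · simpa [coeff_sibuyaDenom] using hl1
  · simpa [coeff_sibuyaDenom] using mul_pos hl0 (sibuyaCoeff_pos hα0 hα1 n)

theorem coeff_sibuyaDenom_sq_le_mul (hα0 : 0 < α) (hα1 : α < 1) (hl0 : 0 < lam)
    (hlam : lam * (1 + α) ≤ 1 - α) (n : ℕ) :
    coeff (n + 1) (sibuyaDenom α lam) ^ 2 ≤
      coeff n (sibuyaDenom α lam) * coeff (n + 2) (sibuyaDenom α lam) := by
  rcases n with _ | n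
  · have h₂ : 2 * sibuyaCoeff α 2 = (1 - α) * α := by
      simpa [sibuyaCoeff_one] using sibuyaCoeff_succ_succ (α := α) 0
    have key : (1 - lam) * (lam * sibuyaCoeff α 2) - (lam * α) ^ 2 =
        lam * α / 2 * (1 - α - lam * (1 + α)) := by
      linear_combination (lam * (1 - lam) / 2) * h₂
    have hkey : 0 ≤ lam * α / 2 * (1 - α - lam * (1 + α)) := by
      have := hl0.le; have := hα0.le
      have : 0 ≤ 1 - α - lam * (1 + α) := by linarith
      positivity
    simp only [coeff_sibuyaDenom, sibuyaCoeff_one, zero_add, one_ne_zero, OfNat.ofNat_ne_zero,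
      if_true, if_false]
    linarith
  · simp only [coeff_sibuyaDenom, Nat.add_eq_zero_iff, one_ne_zero, OfNat.ofNat_ne_zero,
      and_false, if_false]
    nlinarith [sibuyaCoeff_sq_le_mul hα0 hα1 n, sq_nonneg lam]

theorem sibuyaQuotient_mul_sibuyaDenom (hl1 : lam ≠ 1) :
    sibuyaQuotient α lam * sibuyaDenom α lam = sibuyaSeries α := by
  rw [sibuyaQuotient, mul_assoc, PowerSeries.inv_mul_cancel, mul_one]
  rw [constantCoeff_sibuyaDenom]
  exact sub_ne_zero.2 hl1.symm

theorem smul_sibuyaQuotient (hl1 : lam ≠ 1) :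
    lam • sibuyaQuotient α lam = 1 - C (1 - lam) * (sibuyaDenom α lam)⁻¹ := by
  have hD : lam • sibuyaSeries α = sibuyaDenom α lam - C (1 - lam) := by
    rw [sibuyaDenom]; ring
  rw [sibuyaQuotient, ← smul_mul_assoc, hD, sub_mul, PowerSeries.mul_inv_cancel]
  rw [constantCoeff_sibuyaDenom]
  exact sub_ne_zero.2 hl1.symm

theorem coeff_sibuyaQuotient_nonneg (hα0 : 0 < α) (hα1 : α < 1) (hl0 : 0 < lam)
    (hlam : lam * (1 + α) ≤ 1 - α) (n : ℕ) : 0 ≤ coeff n (sibuyaQuotient α lam) := by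
  have hl1 : lam < 1 := by nlinarith
  have h := congrArg (coeff n) (smul_sibuyaQuotient (α := α) hl1.ne)
  rw [coeff_smul, map_sub, coeff_C_mul, smul_eq_mul] at h
  refine (mul_nonneg_iff_of_pos_left hl0).1 ?_
  rw [h]
  rcases n with _ | n
  · simp [constantCoeff_inv, constantCoeff_sibuyaDenom, (sub_pos.2 hl1).ne']
  · have := PowerSeries.coeff_inv_nonpos_of_sq_le_mul
      (coeff_sibuyaDenom_pos hα0 hα1 hl0 hl1) (coeff_sibuyaDenom_sq_le_mul hα0 hα1 hl0 hlam)
      (n.succ_ne_zero)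
    simp only [coeff_one, n.succ_ne_zero, if_false, zero_sub]
    nlinarith

theorem coeff_sibuyaQuotient_mul_le (hα0 : 0 < α) (hα1 : α < 1) (hl0 : 0 < lam)
    (hlam : lam * (1 + α) ≤ 1 - α) (n : ℕ) :
    (1 - lam) * coeff n (sibuyaQuotient α lam) ≤ sibuyaCoeff α n := by
  have hl1 : lam < 1 := by nlinarith
  have h := congrArg (coeff n) (sibuyaQuotient_mul_sibuyaDenom (α := α) hl1.ne)
  rw [coeff_mul, sibuyaSeries, coeff_mk] at h
  have hle := Finset.single_le_sum
    (f := fun p : ℕ × ℕ => coeff p.1 (sibuyaQuotient α lam) * coeff p.2 (sibuyaDenom α lam))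
    (fun p _ => mul_nonneg (coeff_sibuyaQuotient_nonneg hα0 hα1 hl0 hlam p.1)
      (coeff_sibuyaDenom_pos hα0 hα1 hl0 hl1 p.2).le)
    (by simp : (n, 0) ∈ Finset.HasAntidiagonal.antidiagonal n)
  rw [h] at hle
  simpa [coeff_sibuyaDenom, mul_comm] using hle

theorem hasSum_coeff_sibuyaQuotient_mul_pow (hα0 : 0 < α) (hα1 : α < 1) (hl0 : 0 < lam)
    (hlam : lam * (1 + α) ≤ 1 - α) {s : ℝ} (hs : s ∈ Icc (0 : ℝ) 1) :
    HasSum (fun n => coeff n (sibuyaQuotient α lam) * s ^ n)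
      ((1 - (1 - s) ^ α) / (1 - lam * (1 - s) ^ α)) := by
  have hl1 : lam < 1 := by nlinarith
  have hG := hasSum_sibuyaCoeff_mul_pow_of_mem_Icc hα0 hα1 hs
  have hQ : Summable fun n => coeff n (sibuyaQuotient α lam) * s ^ n := by
    refine Summable.of_nonneg_of_le
      (fun n => mul_nonneg (coeff_sibuyaQuotient_nonneg hα0 hα1 hl0 hlam n)
      (pow_nonneg hs.1 n))
      (fun n => ?_) (hG.summable.div_const (1 - lam))
    rw [le_div_iff₀ (sub_pos.2 hl1), mul_right_comm, mul_comm _ (1 - lam)]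
    exact mul_le_mul_of_nonneg_right (coeff_sibuyaQuotient_mul_le hα0 hα1 hl0 hlam n)
      (pow_nonneg hs.1 n)
  have hD : HasSum (fun n => coeff n (sibuyaDenom α lam) * s ^ n) (1 - lam * (1 - s) ^ α) := by
    have h : HasSum (fun n => coeff n (sibuyaDenom α lam) * s ^ n)
        (1 - lam + lam * (1 - (1 - s) ^ α)) :=
      ((hasSum_ite_eq 0 (1 - lam)).add (hG.mul_left lam)).congr_fun fun n => by
        rcases n with _ | n <;> simp [coeff_sibuyaDenom, mul_assoc]
    rwa [show 1 - lam + lam * (1 - (1 - s) ^ α) = 1 - lam * (1 - s) ^ α by ring] at h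
  have hQn : Summable fun n => ‖coeff n (sibuyaQuotient α lam) * s ^ n‖ := hQ.norm
  have hDn : Summable fun n => ‖coeff n (sibuyaDenom α lam) * s ^ n‖ := hD.summable.norm
  have hprod := PowerSeries.tsum_coeff_mul_mul_pow hQn hDn
  rw [sibuyaQuotient_mul_sibuyaDenom hl1.ne, hD.tsum_eq, sibuyaSeries] at hprod
  simp only [coeff_mk, hG.tsum_eq] at hprod
  have hx1 : (1 - s) ^ α ≤ 1 :=
    Real.rpow_le_one (by linarith [hs.2]) (by linarith [hs.1]) hα0.le
  have hden : 1 - lam * (1 - s) ^ α ≠ 0 := by nlinarith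
  rw [hprod, mul_div_cancel_right₀ _ hden]
  exact hQ.hasSum

end Quotient

theorem stmt2_general (α lam : ℝ) (hα0 : 0 < α) (hl0 : 0 < lam)
    (hl1 : lam ≤ (1 - α) / (1 + α)) :
    IsPGF (fun s => (1 - (1 - s) ^ α) / (1 - lam * (1 - s) ^ α)) := by
  have hlam : lam * (1 + α) ≤ 1 - α := (le_div_iff₀ (by linarith)).1 hl1
  have hα1 : α < 1 := by nlinarith
  have hQ := fun s (hs : s ∈ Icc (0 : ℝ) 1) =>
    hasSum_coeff_sibuyaQuotient_mul_pow hα0 hα1 hl0 hlam hs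
  refine ⟨fun n => coeff n (sibuyaQuotient α lam),
    coeff_sibuyaQuotient_nonneg hα0 hα1 hl0 hlam, ?_, fun s hs => (hQ s hs).tsum_eq.symm⟩
  simpa [Real.zero_rpow hα0.ne'] using (hQ 1 ⟨zero_le_one, le_rfl⟩).tsum_eq

/-- Christoph–Schreiber: for `0 < α ≤ 1` and `0 < λ ≤ (1-α)/(1+α)`, the quotient
`Q(s) = (1-(1-s)^α)/(1-λ(1-s)^α)` is a probability generating function. -/
theorem stmt2 (α lam : ℝ) (hα0 : 0 < α) (hα1 : α ≤ 1) (hl0 : 0 < lam)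
    (hl1 : lam ≤ (1 - α) / (1 + α)) :
    IsPGF (fun s => (1 - (1 - s) ^ α) / (1 - lam * (1 - s) ^ α)) :=
  stmt2_general α lam hα0 hl0 hl1
end

section
/- For 0 < α ≤ 1 and 0 < λ < 1, if the Sibuya(α, λ) distribution with PGF P(s) = 1 - λ(1-s)^α is infinitely divisible, then λ ≤ 1 - α. Conversely, if λ ≤ 1 - α then this distribution is infinitely divisible. -/
/-!
Write `P` for the PGF, `F = (log P)'` and `W = (log F)'`. When `0 ≤ α ≤ 1`, the derivatives of
`(1 - s)⁻¹`, `F`, `W` and `P ^ c` (`c ≥ 0`) are polynomials with nonnegative coefficients in these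
same four functions, and `W = (P - α) / ((1 - s) P)`.

If `λ ≤ 1 - α`, then `P ≥ P 0 = 1 - λ ≥ α` on `[0, 1)`, so all four functions, hence all
derivatives of `P ^ (1/n)`, are nonnegative there. By Bernstein's theorem `P ^ (1/n)` is then a
power series with nonnegative coefficients, which sum to `1` because `P 1 = 1`.

Conversely, the `n`-th roots of an infinitely divisible PGF are PGFs, hence convex, and
`n (P ^ (1/n) - 1) → log P`. So `log P` is convex on `[0, 1)` and `F` is nondecreasing there; as
`F' 0 = F 0 * W 0` with `F 0 > 0`, this forces `W 0 ≥ 0`, that is `1 - λ ≥ α`.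
-/

open MeasureTheory Set

open Filter Topology
open scoped Nat
open scoped ContDiff

section Bernstein

variable {f : ℝ → ℝ} {U : Set ℝ} {a b : ℝ}

theorem taylorWithinEval_eq_sum_iteratedDeriv (hU : IsOpen U) (hf : ContDiffOn ℝ ∞ f U)
    (hab : a < b) (hsub : Icc a b ⊆ U) (n : ℕ) :
    taylorWithinEval f n (Icc a b) a b =
      ∑ k ∈ Finset.range (n + 1), iteratedDeriv k f a / k ! * (b - a) ^ k := by
  rw [taylor_within_apply]
  refine Finset.sum_congr rfl fun k _ => ?_
  have hfa : ContDiffAt ℝ k f a :=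
    (hf.contDiffAt (hU.mem_nhds (hsub (left_mem_Icc.2 hab.le)))).of_le (mod_cast le_top)
  rw [iteratedDerivWithin_eq_iteratedDeriv (uniqueDiffOn_Icc hab) hfa (left_mem_Icc.2 hab.le),
    smul_eq_mul]
  ring

theorem sum_iteratedDeriv_mul_pow_le (hU : IsOpen U) (hf : ContDiffOn ℝ ∞ f U)
    (hab : a < b) (hsub : Icc a b ⊆ U) (hnn : ∀ k, ∀ x ∈ Icc a b, 0 ≤ iteratedDeriv k f x)
    (n : ℕ) : ∑ k ∈ Finset.range (n + 1), iteratedDeriv k f a / k ! * (b - a) ^ k ≤ f b := by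
  obtain ⟨x, hx, hrem⟩ := taylor_mean_remainder_lagrange_iteratedDeriv hab.ne
    ((hf.mono (uIcc_of_le hab.le ▸ hsub)).of_le (mod_cast le_top))
  rw [uIcc_of_le hab.le, taylorWithinEval_eq_sum_iteratedDeriv hU hf hab hsub] at hrem
  rw [uIoo_of_le hab.le] at hx
  have : 0 ≤ iteratedDeriv (n + 1) f x * (b - a) ^ (n + 1) / (n + 1)! := by
    have := hnn (n + 1) x (Ioo_subset_Icc_self hx)
    have := sub_nonneg.2 hab.le
    positivity
  exact sub_nonneg.1 (hrem ▸ this)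

theorem iteratedDeriv_mul_pow_div_le (hU : IsOpen U) (hf : ContDiffOn ℝ ∞ f U)
    (hab : a < b) (hsub : Icc a b ⊆ U) (hnn : ∀ k, ∀ x ∈ Icc a b, 0 ≤ iteratedDeriv k f x)
    (n : ℕ) : iteratedDeriv n f a * (b - a) ^ n / n ! ≤ f b := by
  refine le_trans ?_ (sum_iteratedDeriv_mul_pow_le hU hf hab hsub hnn n)
  have hterm : ∀ k ∈ Finset.range (n + 1), 0 ≤ iteratedDeriv k f a / k ! * (b - a) ^ k := by
    intro k _
    have := hnn k a (left_mem_Icc.2 hab.le)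
    have := sub_nonneg.2 hab.le
    positivity
  convert Finset.single_le_sum hterm (Finset.self_mem_range_succ n) using 1
  ring

theorem sub_div_sub_le_sub_div_sub {a ξ x r : ℝ} (haξ : a ≤ ξ) (hxr : x < r) (hξr : ξ < r) :
    (x - ξ) / (r - ξ) ≤ (x - a) / (r - a) := by
  rw [div_le_div_iff₀ (by linarith) (by linarith)]
  nlinarith

theorem taylor_mean_remainder_cauchy_iteratedDeriv (hU : IsOpen U) (hf : ContDiffOn ℝ ∞ f U)
    {x : ℝ} (hax : a < x) (hsub : Icc a x ⊆ U) (n : ℕ) :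
    ∃ ξ ∈ Ioo a x, f x - ∑ k ∈ Finset.range (n + 1), iteratedDeriv k f a / k ! * (x - a) ^ k =
      iteratedDeriv (n + 1) f ξ * (x - ξ) ^ n / n ! * (x - a) := by
  have hfx : ContDiffOn ℝ (n + 1) f (Icc a x) := (hf.mono hsub).of_le (mod_cast le_top)
  obtain ⟨ξ, hξ, hrem⟩ := taylor_mean_remainder_cauchy hax.ne
    (by rw [uIcc_of_le hax.le]; exact hfx.of_succ)
    (by
      rw [uIcc_of_le hax.le, uIoo_of_le hax.le]
      exact (hfx.differentiableOn_iteratedDerivWithin (mod_cast lt_add_one n)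
        (uniqueDiffOn_Icc hax)).mono Ioo_subset_Icc_self)
  rw [uIoo_of_le hax.le] at hξ
  rw [uIcc_of_le hax.le, taylorWithinEval_eq_sum_iteratedDeriv hU hf hax hsub,
    iteratedDerivWithin_eq_iteratedDeriv (uniqueDiffOn_Icc hax)
      (hfx.contDiffAt (Icc_mem_nhds hξ.1 hξ.2)) (Ioo_subset_Icc_self hξ)] at hrem
  exact ⟨ξ, hξ, hrem⟩

theorem sub_sum_iteratedDeriv_mul_pow_le (hU : IsOpen U) (hf : ContDiffOn ℝ ∞ f U) {x r : ℝ}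
    (hax : a < x) (hxr : x < r) (hsub : Icc a r ⊆ U)
    (hnn : ∀ k, ∀ y ∈ Icc a r, 0 ≤ iteratedDeriv k f y) (n : ℕ) :
    f x - ∑ k ∈ Finset.range (n + 1), iteratedDeriv k f a / k ! * (x - a) ^ k ≤
      f r * (x - a) / (r - x) * ((n + 1) * ((x - a) / (r - a)) ^ n) := by
  obtain ⟨ξ, hξ, hrem⟩ := taylor_mean_remainder_cauchy_iteratedDeriv hU hf hax
    ((Icc_subset_Icc_right hxr.le).trans hsub) n
  rw [hrem]
  have hξr : ξ < r := hξ.2.trans hxr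
  have hD : iteratedDeriv (n + 1) f ξ * (r - ξ) ^ (n + 1) / (n + 1)! ≤ f r :=
    iteratedDeriv_mul_pow_div_le hU hf hξr ((Icc_subset_Icc_left hξ.1.le).trans hsub)
      (fun k y hy => hnn k y ⟨hξ.1.le.trans hy.1, hy.2⟩) (n + 1)
  have hrξ : 0 < r - ξ := sub_pos.2 hξr
  have hxξ : 0 < x - ξ := sub_pos.2 hξ.2
  have hxa : 0 < x - a := sub_pos.2 hax
  have hratio : ((x - ξ) / (r - ξ)) ^ n ≤ ((x - a) / (r - a)) ^ n :=
    pow_le_pow_left₀ (div_nonneg hxξ.le hrξ.le) (sub_div_sub_le_sub_div_sub hξ.1.le hxr hξr) n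
  have hinv : (r - ξ)⁻¹ ≤ (r - x)⁻¹ := inv_anti₀ (sub_pos.2 hxr) (by linarith [hξ.2])
  have hfr : 0 ≤ f r := hnn 0 r (right_mem_Icc.2 (hax.trans hxr).le)
  have hq : 0 ≤ ((x - a) / (r - a)) ^ n := by
    have : 0 < r - a := by linarith
    positivity
  calc iteratedDeriv (n + 1) f ξ * (x - ξ) ^ n / n ! * (x - a)
      = iteratedDeriv (n + 1) f ξ * (r - ξ) ^ (n + 1) / (n + 1)! *
          ((n + 1) * (x - a) * ((x - ξ) / (r - ξ)) ^ n * (r - ξ)⁻¹) := by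
        rw [Nat.factorial_succ, div_pow]
        push_cast
        field_simp
        ring
    _ ≤ f r * ((n + 1) * (x - a) * ((x - a) / (r - a)) ^ n * (r - x)⁻¹) := by
        refine mul_le_mul hD ?_ (by positivity) hfr
        gcongr
    _ = f r * (x - a) / (r - x) * ((n + 1) * ((x - a) / (r - a)) ^ n) := by ring

theorem tendsto_succ_mul_pow_atTop_nhds_zero {q : ℝ} (hq0 : 0 ≤ q) (hq1 : q < 1) :
    Tendsto (fun n : ℕ => ((n : ℝ) + 1) * q ^ n) atTop (𝓝 0) := by
  have hq : |q| < 1 := by rwa [abs_of_nonneg hq0]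
  simpa [add_mul] using (tendsto_pow_const_mul_const_pow_of_abs_lt_one 1 hq).add
    (tendsto_pow_atTop_nhds_zero_of_lt_one hq0 hq1)

/-- Bernstein's theorem on absolutely monotone functions. -/
theorem hasSum_taylorSeries_of_iteratedDeriv_nonneg (hU : IsOpen U) (hf : ContDiffOn ℝ ∞ f U)
    (hsub : Ico a b ⊆ U) (hnn : ∀ k, ∀ x ∈ Ico a b, 0 ≤ iteratedDeriv k f x) {x : ℝ}
    (hx : x ∈ Ico a b) :
    HasSum (fun k => iteratedDeriv k f a / k ! * (x - a) ^ k) (f x) := by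
  rcases hx.1.eq_or_lt with rfl | hax
  · convert hasSum_single (f := fun k => iteratedDeriv k f a / k ! * (a - a) ^ k) 0
      (fun k hk => by simp [zero_pow hk]) using 1
    simp
  obtain ⟨r, hxr, hrb⟩ := exists_between hx.2
  have hsubr : Icc a r ⊆ Ico a b := Icc_subset_Ico_right hrb
  have hnnr : ∀ k, ∀ y ∈ Icc a r, 0 ≤ iteratedDeriv k f y := fun k y hy => hnn k y (hsubr hy)
  have hterm : ∀ k, 0 ≤ iteratedDeriv k f a / k ! * (x - a) ^ k := fun k => by
    have := hnn k a (left_mem_Ico.2 (hax.trans hx.2))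
    have := sub_pos.2 hax
    positivity
  have hbound : Tendsto
      (fun n : ℕ => f r * (x - a) / (r - x) * ((n + 1) * ((x - a) / (r - a)) ^ n)) atTop (𝓝 0) := by
    have hra : 0 < r - a := by linarith
    simpa using (tendsto_succ_mul_pow_atTop_nhds_zero (div_nonneg (sub_pos.2 hax).le hra.le)
      ((div_lt_one hra).2 (by linarith))).const_mul (f r * (x - a) / (r - x))
  have hrem : Tendsto (fun n =>
      f x - ∑ k ∈ Finset.range (n + 1), iteratedDeriv k f a / k ! * (x - a) ^ k) atTop (𝓝 0) :=
    squeeze_zero (fun n => sub_nonneg.2 (sum_iteratedDeriv_mul_pow_le hU hf hax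
      ((Icc_subset_Icc_right hxr.le).trans (hsubr.trans hsub)) (fun k y hy => hnnr k y
        ⟨hy.1, hy.2.trans hxr.le⟩) n))
      (fun n => sub_sum_iteratedDeriv_mul_pow_le hU hf hax hxr (hsubr.trans hsub) hnnr n) hbound
  rw [hasSum_iff_tendsto_nat_of_nonneg hterm, ← tendsto_add_atTop_iff_nat 1]
  simpa using (tendsto_const_nhds (x := f x)).sub hrem

end Bernstein

inductive IsNonnegPolyIn (G : Set (ℝ → ℝ)) : (ℝ → ℝ) → Prop
  | of {f : ℝ → ℝ} : f ∈ G → IsNonnegPolyIn G f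
  | add {f g : ℝ → ℝ} : IsNonnegPolyIn G f → IsNonnegPolyIn G g →
      IsNonnegPolyIn G (fun x => f x + g x)
  | mul {f g : ℝ → ℝ} : IsNonnegPolyIn G f → IsNonnegPolyIn G g →
      IsNonnegPolyIn G (fun x => f x * g x)
  | const_mul {c : ℝ} {f : ℝ → ℝ} : 0 ≤ c → IsNonnegPolyIn G f →
      IsNonnegPolyIn G (fun x => c * f x)

namespace IsNonnegPolyIn

variable {G : Set (ℝ → ℝ)} {f : ℝ → ℝ} {U : Set ℝ}

theorem nonneg {T : Set ℝ} (hG : ∀ g ∈ G, ∀ x ∈ T, 0 ≤ g x) (hf : IsNonnegPolyIn G f) :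
    ∀ x ∈ T, 0 ≤ f x := by
  induction hf with
  | of hg => exact hG _ hg
  | add _ _ ih₁ ih₂ => exact fun x hx => add_nonneg (ih₁ x hx) (ih₂ x hx)
  | mul _ _ ih₁ ih₂ => exact fun x hx => mul_nonneg (ih₁ x hx) (ih₂ x hx)
  | const_mul hc _ ih => exact fun x hx => mul_nonneg hc (ih x hx)

theorem exists_hasDerivAt
    (hG : ∀ g ∈ G, ∃ g', IsNonnegPolyIn G g' ∧ ∀ x ∈ U, HasDerivAt g (g' x) x)
    (hf : IsNonnegPolyIn G f) : ∃ f', IsNonnegPolyIn G f' ∧ ∀ x ∈ U, HasDerivAt f (f' x) x := by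
  induction hf with
  | of hg => exact hG _ hg
  | add _ _ ih₁ ih₂ =>
    obtain ⟨f₁', hf₁', hd₁⟩ := ih₁
    obtain ⟨f₂', hf₂', hd₂⟩ := ih₂
    exact ⟨_, hf₁'.add hf₂', fun x hx => (hd₁ x hx).add (hd₂ x hx)⟩
  | mul hf₁ hf₂ ih₁ ih₂ =>
    obtain ⟨f₁', hf₁', hd₁⟩ := ih₁
    obtain ⟨f₂', hf₂', hd₂⟩ := ih₂
    exact ⟨_, (hf₁'.mul hf₂).add (hf₁.mul hf₂'), fun x hx => (hd₁ x hx).mul (hd₂ x hx)⟩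
  | const_mul hc _ ih =>
    obtain ⟨f', hf', hd⟩ := ih
    exact ⟨_, hf'.const_mul hc, fun x hx => (hd x hx).const_mul _⟩

theorem exists_eqOn_iteratedDeriv (hU : IsOpen U)
    (hG : ∀ g ∈ G, ∃ g', IsNonnegPolyIn G g' ∧ ∀ x ∈ U, HasDerivAt g (g' x) x)
    (hf : IsNonnegPolyIn G f) (k : ℕ) :
    ∃ g, IsNonnegPolyIn G g ∧ EqOn (iteratedDeriv k f) g U := by
  induction k with
  | zero => exact ⟨f, hf, fun x _ => by rw [iteratedDeriv_zero]⟩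
  | succ k ih =>
    obtain ⟨g, hg, heq⟩ := ih
    obtain ⟨g', hg', hd⟩ := hg.exists_hasDerivAt hG
    refine ⟨g', hg', fun x hx => ?_⟩
    rw [iteratedDeriv_succ, heq.deriv hU hx]
    exact (hd x hx).deriv

theorem contDiffOn (hU : IsOpen U)
    (hG : ∀ g ∈ G, ∃ g', IsNonnegPolyIn G g' ∧ ∀ x ∈ U, HasDerivAt g (g' x) x)
    (hf : IsNonnegPolyIn G f) : ContDiffOn ℝ ∞ f U := by
  refine contDiffOn_infty.2 fun n => ?_
  induction n generalizing f with
  | zero =>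
    obtain ⟨f', -, hd⟩ := hf.exists_hasDerivAt hG
    exact contDiffOn_zero.2 fun x hx => (hd x hx).continuousAt.continuousWithinAt
  | succ n ih =>
    obtain ⟨f', hf', hd⟩ := hf.exists_hasDerivAt hG
    rw [Nat.cast_succ, contDiffOn_succ_iff_deriv_of_isOpen hU]
    refine ⟨fun x hx => (hd x hx).differentiableAt.differentiableWithinAt, by simp, ?_⟩
    exact (ih hf').congr fun x hx => (hd x hx).deriv

theorem iteratedDeriv_nonneg (hU : IsOpen U) {T : Set ℝ} (hTU : T ⊆ U)
    (hG : ∀ g ∈ G, ∃ g', IsNonnegPolyIn G g' ∧ ∀ x ∈ U, HasDerivAt g (g' x) x)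
    (hGT : ∀ g ∈ G, ∀ x ∈ T, 0 ≤ g x) (hf : IsNonnegPolyIn G f) (k : ℕ) :
    ∀ x ∈ T, 0 ≤ iteratedDeriv k f x := by
  obtain ⟨g, hg, heq⟩ := hf.exists_eqOn_iteratedDeriv hU hG k
  exact fun x hx => heq (hTU hx) ▸ hg.nonneg hGT x hx

end IsNonnegPolyIn

section Convexity

variable {E : Type*} [AddCommGroup E] [Module ℝ E] {D : Set E}

theorem ConvexOn.tsum {f : ℕ → E → ℝ} (hD : Convex ℝ D) (hf : ∀ k, ConvexOn ℝ D (f k))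
    (hs : ∀ x ∈ D, Summable fun k => f k x) : ConvexOn ℝ D fun x => ∑' k, f k x := by
  refine ⟨hD, fun x hx y hy a b ha hb hab => ?_⟩
  have hax := (hs x hx).mul_left a
  have hby := (hs y hy).mul_left b
  simp only [smul_eq_mul]
  rw [← tsum_mul_left, ← tsum_mul_left, ← hax.tsum_add hby]
  exact (hs _ (hD hx hy ha hb hab)).tsum_le_tsum (fun k => (hf k).2 hx hy ha hb hab) (hax.add hby)

theorem ConvexOn.of_tendsto {ι : Type*} {l : Filter ι} [l.NeBot] {F : ι → E → ℝ} {f : E → ℝ}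
    (hD : Convex ℝ D) (hF : ∀ᶠ i in l, ConvexOn ℝ D (F i))
    (hlim : ∀ x ∈ D, Tendsto (fun i => F i x) l (𝓝 (f x))) : ConvexOn ℝ D f :=
  ⟨hD, fun x hx y hy a b ha hb hab =>
    le_of_tendsto_of_tendsto (hlim _ (hD hx hy ha hb hab))
      (((hlim x hx).const_smul a).add ((hlim y hy).const_smul b))
      (hF.mono fun _ hi => hi.2 hx hy ha hb hab)⟩

theorem Real.tendsto_natCast_mul_rpow_inv_sub_one {x : ℝ} (hx : 0 < x) :
    Tendsto (fun n : ℕ => (n : ℝ) * (x ^ (n⁻¹ : ℝ) - 1)) atTop (𝓝 (Real.log x)) := by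
  have hslope := (Real.hasStrictDerivAt_const_rpow hx 0).hasDerivAt.tendsto_slope
  rw [Real.rpow_zero, one_mul] at hslope
  have hinv : Tendsto (fun n : ℕ => (n : ℝ)⁻¹) atTop (𝓝[≠] 0) :=
    (tendsto_inv_atTop_nhdsGT_zero.comp tendsto_natCast_atTop_atTop).mono_right
      (nhdsWithin_mono _ fun _ hy => ne_of_gt hy)
  refine (hslope.comp hinv).congr fun n => ?_
  simp [slope_def_field, Real.rpow_zero, div_inv_eq_mul, mul_comm]

theorem convexOn_log_of_forall_convexOn_rpow_inv {f : E → ℝ} (hD : Convex ℝ D)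
    (hf : ∀ x ∈ D, 0 < f x) (h : ∀ n : ℕ, 0 < n → ConvexOn ℝ D fun x => f x ^ (n⁻¹ : ℝ)) :
    ConvexOn ℝ D fun x => Real.log (f x) :=
  ConvexOn.of_tendsto hD
    ((eventually_gt_atTop 0).mono fun n hn => ((h n hn).add_const (-1)).smul (Nat.cast_nonneg n))
    fun x hx => by
      simpa [← sub_eq_add_neg] using Real.tendsto_natCast_mul_rpow_inv_sub_one (hf x hx)

end Convexity

theorem IsPGF.nonneg {Q : ℝ → ℝ} (hQ : IsPGF Q) : ∀ s ∈ Icc (0:ℝ) 1, 0 ≤ Q s := by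
  obtain ⟨p, hp0, -, hQ⟩ := hQ
  exact fun s hs => hQ s hs ▸ tsum_nonneg fun k => mul_nonneg (hp0 k) (pow_nonneg hs.1 k)

theorem IsPGF.convexOn {Q : ℝ → ℝ} (hQ : IsPGF Q) : ConvexOn ℝ (Icc 0 1) Q := by
  obtain ⟨p, hp0, hp1, hQ⟩ := hQ
  have hp : Summable p := by
    by_contra h
    rw [tsum_eq_zero_of_not_summable h] at hp1
    exact zero_ne_one hp1
  refine (ConvexOn.tsum (convex_Icc 0 1)
    (fun k => ((convexOn_pow k).subset Icc_subset_Ici_self (convex_Icc 0 1)).smul (hp0 k))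
    fun s hs => hp.of_nonneg_of_le (fun k => mul_nonneg (hp0 k) (pow_nonneg hs.1 k))
      fun k => mul_le_of_le_one_right (hp0 k) (pow_le_one₀ hs.1 hs.2)).congr
    fun s hs => (hQ s hs).symm

theorem IsIDPGF.convexOn_rpow_inv {P : ℝ → ℝ} (hP : IsIDPGF P) {n : ℕ} (hn : 0 < n) :
    ConvexOn ℝ (Icc 0 1) fun s => P s ^ (n⁻¹ : ℝ) := by
  obtain ⟨Q, hQ, hPQ⟩ := hP n hn
  exact hQ.convexOn.congr fun s hs => by
    rw [hPQ s hs, Real.pow_rpow_inv_natCast (hQ.nonneg s hs) hn.ne']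

theorem hasSum_of_tendsto_nhdsLT_one {p : ℕ → ℝ} {f : ℝ → ℝ} {L : ℝ} (hp : ∀ k, 0 ≤ p k)
    (hf : ∀ s ∈ Ico (0:ℝ) 1, HasSum (fun k => p k * s ^ k) (f s))
    (hL : Tendsto f (𝓝[<] 1) (𝓝 L)) : HasSum p L := by
  have hIoo : ∀ᶠ s in 𝓝[<] (1:ℝ), s ∈ Ioo 0 1 := Ioo_mem_nhdsLT zero_lt_one
  have hpartial (m : ℕ) : ∑ i ∈ Finset.range m, p i ≤ L := by
    have hpoly : Tendsto (fun s : ℝ => ∑ i ∈ Finset.range m, p i * s ^ i) (𝓝[<] 1)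
        (𝓝 (∑ i ∈ Finset.range m, p i)) := by
      simpa using ((continuous_finsetSum (Finset.range m) fun i _ =>
        continuous_const.mul (continuous_pow i)).tendsto (1:ℝ)).mono_left nhdsWithin_le_nhds
    refine le_of_tendsto_of_tendsto hpoly hL (hIoo.mono fun s hs => ?_)
    exact sum_le_hasSum _ (fun i _ => mul_nonneg (hp i) (pow_nonneg hs.1.le i))
      (hf s (Ioo_subset_Ico_self hs))
  have hsum : Summable p := summable_of_sum_range_le hp hpartial
  have hge : L ≤ ∑' k, p k := by
    refine le_of_tendsto hL (hIoo.mono fun s hs => ?_)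
    have hfs := hf s (Ioo_subset_Ico_self hs)
    exact hfs.tsum_eq ▸ hfs.summable.tsum_le_tsum
      (fun k => mul_le_of_le_one_right (hp k) (pow_le_one₀ hs.1.le hs.2.le)) hsum
  exact hsum.hasSum_iff.2 (le_antisymm (Real.tsum_le_of_sum_range_le hp hpartial) hge)

theorem hasDerivAt_inv_one_sub {s : ℝ} (hs : s ≠ 1) :
    HasDerivAt (fun x => (1 - x)⁻¹) ((1 - s)⁻¹ * (1 - s)⁻¹) s := by
  have hu : 1 - s ≠ 0 := sub_ne_zero.2 hs.symm
  refine (((hasDerivAt_id s).const_sub 1).inv hu).congr_deriv ?_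
  simp only [id]
  field_simp

namespace Sibuya

variable {α lam c s : ℝ}

noncomputable def pgf (α lam s : ℝ) : ℝ := 1 - lam * (1 - s) ^ α

noncomputable def logDerivPgf (α lam s : ℝ) : ℝ := α * (1 - pgf α lam s) / ((1 - s) * pgf α lam s)

noncomputable def logDerivLogDerivPgf (α lam s : ℝ) : ℝ := (1 - α) / (1 - s) - logDerivPgf α lam s

def domain (α lam : ℝ) : Set ℝ := {s | s < 1 ∧ 0 < pgf α lam s}

def generators (α lam c : ℝ) : Set (ℝ → ℝ) :=
  {fun s => (1 - s)⁻¹, logDerivPgf α lam, logDerivLogDerivPgf α lam, fun s => pgf α lam s ^ c}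

theorem continuous_pgf (hα : 0 ≤ α) : Continuous (pgf α lam) :=
  continuous_const.sub (continuous_const.mul
    ((Real.continuous_rpow_const hα).comp (continuous_const.sub continuous_id)))

theorem isOpen_domain (hα : 0 ≤ α) : IsOpen (domain α lam) :=
  (isOpen_lt continuous_id continuous_const).inter (isOpen_lt continuous_const (continuous_pgf hα))

theorem pgf_one (hα : 0 < α) : pgf α lam 1 = 1 := by
  simp [pgf, Real.zero_rpow hα.ne']

theorem pgf_zero : pgf α lam 0 = 1 - lam := by
  simp [pgf]

theorem one_sub_pgf : 1 - pgf α lam s = lam * (1 - s) ^ α := by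
  rw [pgf, sub_sub_cancel]

theorem one_sub_le_pgf (hα : 0 < α) (hl : 0 ≤ lam) (hs : s ∈ Ico (0:ℝ) 1) :
    1 - lam ≤ pgf α lam s := by
  have : (1 - s) ^ α ≤ 1 := Real.rpow_le_one (by linarith [hs.2]) (by linarith [hs.1]) hα.le
  unfold pgf
  nlinarith

theorem Ico_subset_domain (hα : 0 < α) (hl0 : 0 ≤ lam) (hl1 : lam < 1) :
    Ico 0 1 ⊆ domain α lam :=
  fun s hs => ⟨hs.2, by linarith [one_sub_le_pgf hα hl0 hs]⟩

theorem hasDerivAt_pgf (hs : s < 1) :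
    HasDerivAt (pgf α lam) (α * (1 - pgf α lam s) / (1 - s)) s := by
  have hu : 1 - s ≠ 0 := by linarith
  refine ((((hasDerivAt_id s).const_sub 1).rpow_const (p := α) (Or.inl hu)).const_mul lam
    |>.const_sub 1).congr_deriv ?_
  simp only [pgf, id]
  rw [Real.rpow_sub_one hu]
  field_simp
  ring

theorem hasDerivAt_log_pgf (hs : s ∈ domain α lam) :
    HasDerivAt (fun x => Real.log (pgf α lam x)) (logDerivPgf α lam s) s := by
  refine ((hasDerivAt_pgf hs.1).log hs.2.ne').congr_deriv ?_
  rw [logDerivPgf, div_div]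

theorem hasDerivAt_logDerivPgf (hs : s ∈ domain α lam) :
    HasDerivAt (logDerivPgf α lam) (logDerivPgf α lam s * logDerivLogDerivPgf α lam s) s := by
  have hu : 1 - s ≠ 0 := by linarith [hs.1]
  have hP := hs.2.ne'
  have hd := hasDerivAt_pgf (α := α) (lam := lam) hs.1
  refine ((((hd.const_sub 1).const_mul α).div
    (((hasDerivAt_id s).const_sub 1).mul hd) (mul_ne_zero hu hP))).congr_deriv ?_
  simp only [logDerivPgf, logDerivLogDerivPgf, id, Pi.mul_apply]
  field_simp
  ring

theorem hasDerivAt_logDerivLogDerivPgf (hs : s ∈ domain α lam) :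
    HasDerivAt (logDerivLogDerivPgf α lam)
      (α * (1 - α) * ((1 - s)⁻¹ * (1 - s)⁻¹) + (1 - α) * ((1 - s)⁻¹ * logDerivLogDerivPgf α lam s)
        + logDerivPgf α lam s * logDerivPgf α lam s) s := by
  have hu : 1 - s ≠ 0 := by linarith [hs.1]
  refine (((hasDerivAt_const s (1 - α)).div ((hasDerivAt_id s).const_sub 1) hu).sub
    (hasDerivAt_logDerivPgf hs)).congr_deriv ?_
  simp only [logDerivLogDerivPgf, id]
  field_simp
  ring

theorem hasDerivAt_pgf_rpow (hs : s ∈ domain α lam) :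
    HasDerivAt (fun x => pgf α lam x ^ c) (c * (pgf α lam s ^ c * logDerivPgf α lam s)) s := by
  refine ((hasDerivAt_pgf hs.1).rpow_const (Or.inl hs.2.ne')).congr_deriv ?_
  rw [Real.rpow_sub_one hs.2.ne', logDerivPgf]
  field_simp

theorem logDerivLogDerivPgf_eq (hs : s ∈ domain α lam) :
    logDerivLogDerivPgf α lam s = (pgf α lam s - α) / ((1 - s) * pgf α lam s) := by
  have hu : 1 - s ≠ 0 := by linarith [hs.1]
  have hP := hs.2.ne'
  simp only [logDerivLogDerivPgf, logDerivPgf]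
  field_simp
  ring

theorem generators_hasDerivAt (hα0 : 0 ≤ α) (hα1 : α ≤ 1) (hc : 0 ≤ c) :
    ∀ g ∈ generators α lam c, ∃ g', IsNonnegPolyIn (generators α lam c) g' ∧
      ∀ x ∈ domain α lam, HasDerivAt g (g' x) x := by
  have hA : IsNonnegPolyIn (generators α lam c) fun s => (1 - s)⁻¹ := .of (by simp [generators])
  have hF : IsNonnegPolyIn (generators α lam c) (logDerivPgf α lam) := .of (by simp [generators])
  have hW : IsNonnegPolyIn (generators α lam c) (logDerivLogDerivPgf α lam) :=
    .of (by simp [generators])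
  have hQ : IsNonnegPolyIn (generators α lam c) fun s => pgf α lam s ^ c :=
    .of (by simp [generators])
  rintro g (rfl | rfl | rfl | rfl)
  · exact ⟨_, hA.mul hA, fun x hx => hasDerivAt_inv_one_sub hx.1.ne⟩
  · exact ⟨_, hF.mul hW, fun x hx => hasDerivAt_logDerivPgf hx⟩
  · refine ⟨_, ?_, fun x hx => hasDerivAt_logDerivLogDerivPgf hx⟩
    exact (((hA.mul hA).const_mul (mul_nonneg hα0 (sub_nonneg.2 hα1))).add
      ((hA.mul hW).const_mul (sub_nonneg.2 hα1))).add (hF.mul hF)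
  · exact ⟨_, (hQ.mul hF).const_mul hc, fun x hx => hasDerivAt_pgf_rpow hx⟩

theorem generators_nonneg (hα0 : 0 < α) (hl0 : 0 ≤ lam) (hle : lam ≤ 1 - α) :
    ∀ g ∈ generators α lam c, ∀ x ∈ Ico (0:ℝ) 1, 0 ≤ g x := by
  intro g hg x hx
  have hu : 0 < 1 - x := sub_pos.2 hx.2
  have hPα : α ≤ pgf α lam x := by linarith [one_sub_le_pgf hα0 hl0 hx]
  have hP : 0 < pgf α lam x := hα0.trans_le hPα
  rcases hg with rfl | rfl | rfl | rfl
  · positivity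
  · have h1P : 0 ≤ 1 - pgf α lam x := by
      rw [one_sub_pgf]
      positivity
    unfold logDerivPgf
    positivity
  · rw [logDerivLogDerivPgf_eq ⟨hx.2, hP⟩]
    exact div_nonneg (sub_nonneg.2 hPα) (by positivity)
  · exact Real.rpow_nonneg hP.le c

theorem isIDPGF_of_le (hα0 : 0 < α) (hl0 : 0 ≤ lam) (hle : lam ≤ 1 - α) :
    IsIDPGF (pgf α lam) := by
  intro n hn
  set Q := fun s => pgf α lam s ^ (n⁻¹ : ℝ)
  have hQ : IsNonnegPolyIn (generators α lam (n⁻¹ : ℝ)) Q := .of (by simp [generators, Q])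
  have hU := isOpen_domain (lam := lam) hα0.le
  have hsub := Ico_subset_domain hα0 hl0 (by linarith)
  have hG := generators_hasDerivAt (lam := lam) hα0.le (by linarith)
    (by positivity : (0:ℝ) ≤ (n:ℝ)⁻¹)
  have hnn := hQ.iteratedDeriv_nonneg hU hsub hG (generators_nonneg hα0 hl0 hle)
  have hseries (s : ℝ) (hs : s ∈ Ico (0:ℝ) 1) :
      HasSum (fun k => iteratedDeriv k Q 0 / k ! * s ^ k) (Q s) := by
    simpa using hasSum_taylorSeries_of_iteratedDeriv_nonneg hU (hQ.contDiffOn hU hG) hsub hnn hs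
  have hcoeff (k : ℕ) : 0 ≤ iteratedDeriv k Q 0 / k ! :=
    div_nonneg (hnn k 0 (left_mem_Ico.2 zero_lt_one)) (by positivity)
  have hlim : Tendsto Q (𝓝[<] 1) (𝓝 1) := by
    simpa [pgf_one hα0] using (((continuous_pgf hα0.le).tendsto 1).rpow_const
      (Or.inr (by positivity : (0:ℝ) ≤ (n:ℝ)⁻¹))).mono_left (nhdsWithin_le_nhds (s := Iio (1:ℝ)))
  have hsum := hasSum_of_tendsto_nhdsLT_one hcoeff hseries hlim
  refine ⟨fun s => ∑' k, iteratedDeriv k Q 0 / k ! * s ^ k,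
    ⟨_, hcoeff, hsum.tsum_eq, fun _ _ => rfl⟩, fun s hs => ?_⟩
  rcases hs.2.lt_or_eq with hs1 | rfl
  · dsimp only
    rw [(hseries s ⟨hs.1, hs1⟩).tsum_eq, Real.rpow_inv_natCast_pow (hsub ⟨hs.1, hs1⟩).2.le hn.ne']
  · simp [hsum.tsum_eq, pgf_one hα0]

theorem le_of_isIDPGF (hα0 : 0 < α) (hl0 : 0 < lam) (hl1 : lam < 1) (h : IsIDPGF (pgf α lam)) :
    lam ≤ 1 - α := by
  have hsub := Ico_subset_domain hα0 hl0.le hl1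
  have hconv : ConvexOn ℝ (Ico 0 1) fun s => Real.log (pgf α lam s) :=
    convexOn_log_of_forall_convexOn_rpow_inv (convex_Ico 0 1) (fun s hs => (hsub hs).2)
      fun n hn => (h.convexOn_rpow_inv hn).subset Ico_subset_Icc_self (convex_Ico 0 1)
  have hmono : MonotoneOn (logDerivPgf α lam) (Ico 0 1) :=
    (hconv.monotoneOn_deriv fun s hs => (hasDerivAt_log_pgf (hsub hs)).differentiableAt).congr
      fun s hs => (hasDerivAt_log_pgf (hsub hs)).deriv
  have h0 := hsub (left_mem_Ico.2 zero_lt_one)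
  have hderiv : 0 ≤ logDerivPgf α lam 0 * logDerivLogDerivPgf α lam 0 := by
    rw [← (hasDerivAt_logDerivPgf h0).hasDerivWithinAt.derivWithin
      (uniqueDiffOn_Ico 0 1 0 (left_mem_Ico.2 zero_lt_one))]
    exact hmono.derivWithin_nonneg
  have hP0 : 0 < 1 - lam := by linarith
  have hF : 0 < logDerivPgf α lam 0 := by
    rw [logDerivPgf, pgf_zero, sub_sub_cancel]
    positivity
  have hW := nonneg_of_mul_nonneg_right hderiv hF
  rw [logDerivLogDerivPgf_eq h0, pgf_zero, sub_zero, one_mul, le_div_iff₀ hP0, zero_mul] at hW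
  linarith

end Sibuya

theorem stmt4_general (α lam : ℝ) (hα0 : 0 < α) (hl0 : 0 < lam) (hl1 : lam < 1) :
    IsIDPGF (fun s => 1 - lam * (1 - s) ^ α) ↔ lam ≤ 1 - α :=
  ⟨Sibuya.le_of_isIDPGF hα0 hl0 hl1, Sibuya.isIDPGF_of_le hα0 hl0.le⟩

/-- Christoph–Schreiber: for `0 < α ≤ 1`, `0 < λ < 1`, the Sibuya(α,λ) law with PGF
`P(s) = 1 - λ(1-s)^α` is infinitely divisible iff `λ ≤ 1 - α`. -/
theorem stmt4 (α lam : ℝ) (hα0 : 0 < α) (hα1 : α ≤ 1) (hl0 : 0 < lam) (hl1 : lam < 1) :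
    IsIDPGF (fun s => 1 - lam * (1 - s) ^ α) ↔ lam ≤ 1 - α :=
  stmt4_general α lam hα0 hl0 hl1
end

section
/- There exist a characteristic function φ on ℝ, a constant b ∈ (0,1), and a characteristic function φ_0 such that φ(t) = φ(bt)·φ_0(t) for all t ∈ ℝ, yet φ is not the characteristic function of an infinitely divisible distribution. -/
/-!
The uniform law on `[-1, 1]` has characteristic function `sinc t = sinc (t/2) · cos (t/2)`, and
`cos (t/2)` is the characteristic function of the symmetric law on `±1/2`; this gives the
decomposition with `b = 1/2`. The uniform law is not infinitely divisible because `sinc` vanishes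
at `π`. Indeed, for any characteristic function `ψ` one has
`1 - |ψ(2t)|² ≤ 4 (1 - |ψ(t)|²)`, as `|ψ|²` is the (real) characteristic function of the
symmetrization and `1 - cos 2x ≤ 4 (1 - cos x)`. So if `sinc = ψ⁴`, then `ψ(π) = 0` forces
`|ψ(π/2)|² ≤ 3/4`, whence `2/π = sinc (π/2) = |ψ(π/2)|⁴ ≤ 9/16`, contradicting `π < 32/9`.
-/

open MeasureTheory Set

open ProbabilityTheory Complex
open scoped ENNReal

namespace Real

lemma sinc_eq_sinc_half_mul_cos_half (x : ℝ) : sinc x = sinc (x / 2) * cos (x / 2) := by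
  rcases eq_or_ne x 0 with rfl | hx
  · simp
  have hsin := sin_two_mul (x / 2)
  rw [mul_div_cancel₀ x two_ne_zero] at hsin
  rw [sinc_of_ne_zero hx, sinc_of_ne_zero (by positivity), hsin]
  field_simp

lemma sinc_pi : sinc π = 0 := by
  rw [sinc_of_ne_zero pi_ne_zero, sin_pi, zero_div]

lemma sinc_pi_div_two : sinc (π / 2) = 2 / π := by
  rw [sinc_of_ne_zero (by positivity), sin_pi_div_two, one_div_div]

lemma one_sub_cos_two_mul_le (x : ℝ) : 1 - cos (2 * x) ≤ 4 * (1 - cos x) := by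
  rw [cos_two_mul]
  nlinarith [cos_le_one x, neg_one_le_cos x]

end Real

lemma cf_eq_charFun (μ : Measure ℝ) : cf μ = charFun μ := by
  ext t
  rw [cf, charFun_apply_real]

section CharFunInequality

variable (μ : Measure ℝ)

lemma integrable_cos_mul [IsFiniteMeasure μ] (t : ℝ) :
    Integrable (fun x ↦ Real.cos (t * x)) μ :=
  (integrable_const (1 : ℝ)).mono (by fun_prop) (by simp [Real.abs_cos_le_one])

lemma re_charFun [IsFiniteMeasure μ] (t : ℝ) :
    (charFun μ t).re = ∫ x, Real.cos (t * x) ∂μ := by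
  rw [charFun_apply_real, ← RCLike.re_to_complex, ← integral_re]
  · simp_rw [RCLike.re_to_complex, ← ofReal_mul, exp_ofReal_mul_I_re]
  · exact (integrable_const (1 : ℝ)).mono (by fun_prop) (by simp [norm_exp])

variable [IsProbabilityMeasure μ]

lemma one_sub_re_charFun (t : ℝ) :
    1 - (charFun μ t).re = ∫ x, (1 - Real.cos (t * x)) ∂μ := by
  rw [integral_sub (integrable_const 1) (integrable_cos_mul μ t), re_charFun]
  simp

lemma one_sub_re_charFun_two_mul_le (t : ℝ) :
    1 - (charFun μ (2 * t)).re ≤ 4 * (1 - (charFun μ t).re) := by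
  rw [one_sub_re_charFun, one_sub_re_charFun, ← integral_const_mul]
  refine integral_mono ((integrable_const 1).sub (integrable_cos_mul μ _))
    (((integrable_const 1).sub (integrable_cos_mul μ t)).const_mul 4) fun x ↦ ?_
  simpa [mul_assoc] using Real.one_sub_cos_two_mul_le (t * x)

lemma charFun_conv_map_neg_self (t : ℝ) :
    charFun (μ ∗ μ.map Neg.neg) t = (‖charFun μ t‖ ^ 2 : ℝ) := by
  have hneg : charFun (μ.map Neg.neg) t = charFun μ (-t) := by
    simpa using charFun_map_mul (μ := μ) (-1) t
  rw [charFun_conv, hneg, charFun_neg, mul_conj, normSq_eq_norm_sq]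

lemma one_sub_sq_norm_charFun_two_mul_le (t : ℝ) :
    1 - ‖charFun μ (2 * t)‖ ^ 2 ≤ 4 * (1 - ‖charFun μ t‖ ^ 2) := by
  have := Measure.isProbabilityMeasure_map (μ := μ) (f := Neg.neg) (by fun_prop)
  simpa only [charFun_conv_map_neg_self, ofReal_re] using
    one_sub_re_charFun_two_mul_le (μ ∗ μ.map Neg.neg) t

end CharFunInequality

lemma IsIDCF.norm_le_of_apply_two_mul_eq_zero {φ : ℝ → ℂ} (hφ : IsIDCF φ) {t : ℝ}
    (h0 : φ (2 * t) = 0) : ‖φ t‖ ≤ 9 / 16 := by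
  obtain ⟨_, ⟨ν, _, rfl⟩, hroot⟩ := hφ 4 (by norm_num)
  rw [cf_eq_charFun] at hroot
  have hν0 : charFun ν (2 * t) = 0 :=
    pow_eq_zero_iff (by norm_num) |>.mp ((hroot _).symm.trans h0)
  have hle := one_sub_sq_norm_charFun_two_mul_le ν t
  rw [hν0, norm_zero] at hle
  rw [hroot, norm_pow]
  nlinarith [sq_nonneg ‖charFun ν t‖]

noncomputable def uniformIcc : Measure ℝ := volume[|Icc (-1) 1]

instance : IsProbabilityMeasure uniformIcc :=
  cond_isProbabilityMeasure_of_finite (by simp) (by simp)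

lemma charFun_uniformIcc (t : ℝ) : charFun uniformIcc t = Real.sinc t := by
  rcases eq_or_ne t 0 with rfl | ht
  · simp
  have htI : (t : ℂ) * I ≠ 0 := mul_ne_zero (ofReal_ne_zero.mpr ht) I_ne_zero
  have hvol : (volume (Icc (-1 : ℝ) 1))⁻¹.toReal = 2⁻¹ := by norm_num [Real.volume_Icc]
  rw [uniformIcc, charFun_apply_real, ProbabilityTheory.cond, integral_smul_measure, hvol,
    integral_Icc_eq_integral_Ioc, ← intervalIntegral.integral_of_le (by norm_num)]
  simp_rw [show ∀ x : ℝ, (t : ℂ) * x * I = (t * I) * x from fun x ↦ by ring]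
  rw [integral_exp_mul_complex htI, Real.sinc_of_ne_zero ht, real_smul]
  simp only [ofReal_inv, ofReal_ofNat, ofReal_one, ofReal_neg, mul_one, mul_neg, ofReal_div,
    ofReal_sin, sin]
  field_simp
  ring_nf
  rw [I_sq]
  ring

noncomputable def symmetricBernoulli (a : ℝ) : Measure ℝ :=
  (2⁻¹ : ℝ≥0∞) • (Measure.dirac (-a) + Measure.dirac a)

instance (a : ℝ) : IsProbabilityMeasure (symmetricBernoulli a) := by
  constructor
  simp [symmetricBernoulli, ENNReal.inv_two_add_inv_two]

lemma charFun_symmetricBernoulli (a t : ℝ) :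
    charFun (symmetricBernoulli a) t = Real.cos (a * t) := by
  have hint (x : ℝ) : Integrable (fun y : ℝ ↦ cexp (t * y * I)) (Measure.dirac x) :=
    (integrable_const (1 : ℝ)).mono (by fun_prop) (by simp [norm_exp])
  rw [symmetricBernoulli, charFun_apply_real, integral_smul_measure,
    integral_add_measure (hint _) (hint _), integral_dirac, integral_dirac, ofReal_cos, cos]
  simp only [ENNReal.toReal_inv, ENNReal.toReal_ofNat, ofReal_neg, mul_neg, neg_mul, smul_add,
    real_smul, ofReal_inv, ofReal_ofNat, ofReal_mul]
  ring_nf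

/-- There are a characteristic function `φ`, a constant `b ∈ (0,1)` and a
characteristic function `φ₀` with `φ(t) = φ(bt)·φ₀(t)` for all `t`, yet `φ` is not
the characteristic function of an infinitely divisible law. -/
theorem stmt12 :
    ∃ (φ φ₀ : ℝ → ℂ) (b : ℝ), IsCF φ ∧ IsCF φ₀ ∧ 0 < b ∧ b < 1 ∧
      (∀ t : ℝ, φ t = φ (b * t) * φ₀ t) ∧ ¬ IsIDCF φ := by
  refine ⟨cf uniformIcc, cf (symmetricBernoulli 2⁻¹), 2⁻¹, ⟨_, inferInstance, rfl⟩,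
    ⟨_, inferInstance, rfl⟩, by norm_num, by norm_num, fun t ↦ ?_, fun hID ↦ ?_⟩
  · simp only [cf_eq_charFun, charFun_uniformIcc, charFun_symmetricBernoulli]
    rw [Real.sinc_eq_sinc_half_mul_cos_half t, inv_mul_eq_div, ofReal_mul]
  · have h := hID.norm_le_of_apply_two_mul_eq_zero (t := Real.pi / 2) (by
      rw [mul_div_cancel₀ _ two_ne_zero, cf_eq_charFun, charFun_uniformIcc, Real.sinc_pi,
        ofReal_zero])
    rw [cf_eq_charFun, charFun_uniformIcc, Real.sinc_pi_div_two, norm_real,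
      Real.norm_of_nonneg (by positivity), div_le_iff₀ Real.pi_pos] at h
    linarith [Real.pi_lt_d2]
end

section
/- There exist a probability generating function P of a distribution on {0,1,2,...}, a constant c ∈ (0,1), and a probability generating function P_0 such that P(s) = P(1-c+cs)·P_0(s) for all s ∈ (0,1), yet the distribution with PGF P is not infinitely divisible. -/
/-! `P(s) = 1 - √(1 - s)` is the PGF of the Sibuya(1/2) law, with coefficients
`catalan (n - 1) / (2 · 4ⁿ⁻¹)`; the Catalan recursion is the identity `P² = 2P - s`, valid up to
`s = 1`. For `c = 1/9` and `u = √(1 - s)` we get `P(1 - c + cs) = 1 - u/3`, and the quotient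
`P₀ = (1 - u) / (1 - u/3) = 6 (1 - u + s/2) / (8 + s)` is a PGF: dividing the coefficients `bₙ` of
`1 - u + s/2` by `1 + s/8` keeps them nonnegative since `bₙ ≤ 8 bₙ₊₁`.

`P` is not infinitely divisible because `P(0) = 0`: every `n`-th root `Q` of `P` also has
`Q(0) = 0`, hence `Q(s) ≤ s` and `P(s) ≤ sⁿ` on `[0, 1]`, which forces `P = 0` on `[0, 1)`. -/

open MeasureTheory Set

open Finset Filter

section PowerSeries

variable {p : ℕ → ℝ} {s : ℝ}

lemma summable_mul_pow_of_nonneg (hp : ∀ n, 0 ≤ p n) (hsum : Summable p)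
    (hs : s ∈ Icc (0:ℝ) 1) : Summable fun n ↦ p n * s ^ n :=
  hsum.of_nonneg_of_le (fun n ↦ mul_nonneg (hp n) (pow_nonneg hs.1 n))
    fun n ↦ mul_le_of_le_one_right (hp n) (pow_le_one₀ hs.1 hs.2)

lemma isPGF_of_tsum_mul_pow_eq {P : ℝ → ℝ} (hp : ∀ n, 0 ≤ p n)
    (hP : ∀ s ∈ Icc (0:ℝ) 1, ∑' n, p n * s ^ n = P s) (h1 : P 1 = 1) : IsPGF P :=
  ⟨p, hp, by simpa [h1] using hP 1 ⟨zero_le_one, le_rfl⟩, fun s hs ↦ (hP s hs).symm⟩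

end PowerSeries

section DivOneAddMulX

/-- The coefficients of `B(s) / (1 + t s)`, where `B(s) = ∑ bₙ sⁿ`. -/
noncomputable def divOneAddMulX (t : ℝ) (b : ℕ → ℝ) : ℕ → ℝ
  | 0 => b 0
  | n + 1 => b (n + 1) - t * divOneAddMulX t b n

variable {t : ℝ} {b : ℕ → ℝ}

lemma divOneAddMulX_mem_Icc (ht : 0 ≤ t) (hb : ∀ n, 0 ≤ b n) (hbt : ∀ n, t * b n ≤ b (n + 1))
    (n : ℕ) : divOneAddMulX t b n ∈ Icc 0 (b n) := by
  induction n with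
  | zero => exact ⟨hb 0, le_rfl⟩
  | succ n ih =>
    have := mul_le_mul_of_nonneg_left ih.2 ht
    have := mul_nonneg ht ih.1
    constructor <;> simp only [divOneAddMulX] <;> linarith [hbt n]

lemma one_add_mul_mul_tsum_divOneAddMulX {s : ℝ}
    (hq : Summable fun n ↦ divOneAddMulX t b n * s ^ n) (hb : Summable fun n ↦ b n * s ^ n) :
    (1 + t * s) * ∑' n, divOneAddMulX t b n * s ^ n = ∑' n, b n * s ^ n := by
  set q := divOneAddMulX t b
  have hq' : Summable fun n ↦ q (n + 1) * s ^ (n + 1) := (summable_nat_add_iff 1).mpr hq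
  have hb_succ (n : ℕ) :
      b (n + 1) * s ^ (n + 1) = q (n + 1) * s ^ (n + 1) + t * s * (q n * s ^ n) := by
    simp only [q, divOneAddMulX]
    ring
  rw [hb.tsum_eq_zero_add, tsum_congr hb_succ, hq'.tsum_add (hq.mul_left _), tsum_mul_left,
    hq.tsum_eq_zero_add]
  simp only [q, divOneAddMulX]
  ring

end DivOneAddMulX

section NotInfinitelyDivisible

variable {P : ℝ → ℝ} {s : ℝ}

lemma IsPGF.nonneg_s13 (hP : IsPGF P) (hs : s ∈ Icc (0:ℝ) 1) : 0 ≤ P s := by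
  obtain ⟨p, hp, -, hP⟩ := hP
  rw [hP s hs]
  exact tsum_nonneg fun n ↦ mul_nonneg (hp n) (pow_nonneg hs.1 n)

lemma IsPGF.le_self_of_map_zero (hP : IsPGF P) (h0 : P 0 = 0) (hs : s ∈ Icc (0:ℝ) 1) :
    P s ≤ s := by
  obtain ⟨p, hp, hp1, hP⟩ := hP
  have hsum : Summable p := by
    by_contra h
    simp [tsum_eq_zero_of_not_summable h] at hp1
  have hp0 : p 0 = 0 := by
    have h := hP 0 ⟨le_rfl, zero_le_one⟩
    rw [h0, tsum_eq_single 0 fun n hn ↦ by simp [zero_pow hn]] at h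
    simpa using h.symm
  have hterm (n : ℕ) : p n * s ^ n ≤ p n * s := by
    rcases n with _ | n
    · simp [hp0]
    · exact mul_le_mul_of_nonneg_left
        (pow_le_of_le_one hs.1 hs.2 n.succ_ne_zero) (hp _)
  calc P s = ∑' n, p n * s ^ n := hP s hs
    _ ≤ ∑' n, p n * s := (summable_mul_pow_of_nonneg hp hsum hs).tsum_le_tsum hterm
        (hsum.mul_right s)
    _ = s := by rw [tsum_mul_right, hp1, one_mul]

lemma IsIDPGF.eq_zero_of_map_zero (hP : IsIDPGF P) (h0 : P 0 = 0) (hs : s ∈ Ico (0:ℝ) 1) :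
    P s = 0 := by
  have hs' : s ∈ Icc (0:ℝ) 1 := Ico_subset_Icc_self hs
  have hbound (n : ℕ) : 0 ≤ P s ∧ P s ≤ s ^ (n + 1) := by
    obtain ⟨Q, hQ, hPQ⟩ := hP (n + 1) n.succ_pos
    have hQ0 : Q 0 = 0 := by
      simpa [hPQ 0 ⟨le_rfl, zero_le_one⟩] using h0
    rw [hPQ s hs']
    exact ⟨pow_nonneg (hQ.nonneg_s13 hs') _,
      pow_le_pow_left₀ (hQ.nonneg_s13 hs') (hQ.le_self_of_map_zero hQ0 hs') _⟩
  have hlim : Tendsto (fun n : ℕ ↦ s ^ (n + 1)) atTop (nhds 0) :=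
    (tendsto_pow_atTop_nhds_zero_of_lt_one hs.1 hs.2).comp (tendsto_add_atTop_nat 1)
  exact le_antisymm (ge_of_tendsto hlim (Eventually.of_forall fun n ↦ (hbound n).2))
    (hbound 0).1

end NotInfinitelyDivisible

lemma catalan_le_catalan_succ (n : ℕ) : catalan n ≤ catalan (n + 1) := by
  rw [catalan_succ']
  calc catalan n = catalan (n, 0).1 * catalan (n, 0).2 := by simp
    _ ≤ _ := single_le_sum (f := fun ij : ℕ × ℕ ↦ catalan ij.1 * catalan ij.2)
        (fun _ _ ↦ Nat.zero_le _) (by simp)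

lemma centralBinom_succ_add_two_mul_catalan (n : ℕ) :
    (n + 1).centralBinom + 2 * catalan n = 4 * n.centralBinom := by
  refine Nat.eq_of_mul_eq_mul_left n.succ_pos ?_
  calc (n + 1) * ((n + 1).centralBinom + 2 * catalan n)
      = (n + 1) * (n + 1).centralBinom + 2 * ((n + 1) * catalan n) := by ring
    _ = (n + 1) * (4 * n.centralBinom) := by
      rw [Nat.succ_mul_centralBinom_succ, succ_mul_catalan_eq_centralBinom]; ring

/-- The coefficients of `1 - √(1 - s)`. -/
noncomputable def sibuyaHalfCoeff : ℕ → ℝ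
  | 0 => 0
  | m + 1 => catalan m / (2 * 4 ^ m)

lemma sibuyaHalfCoeff_nonneg (n : ℕ) : 0 ≤ sibuyaHalfCoeff n := by
  cases n <;> simp only [sibuyaHalfCoeff] <;> positivity

lemma sibuyaHalfCoeff_succ_eq_sub (n : ℕ) :
    sibuyaHalfCoeff (n + 1) =
      n.centralBinom / 4 ^ n - ((n + 1).centralBinom : ℝ) / 4 ^ (n + 1) := by
  have h : ((n + 1).centralBinom : ℝ) = 4 * n.centralBinom - 2 * catalan n := by
    rw [eq_sub_iff_add_eq]; exact_mod_cast centralBinom_succ_add_two_mul_catalan n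
  rw [sibuyaHalfCoeff, h, pow_succ]
  field_simp
  ring

lemma sum_range_sibuyaHalfCoeff_le_one (N : ℕ) : ∑ n ∈ range N, sibuyaHalfCoeff n ≤ 1 := by
  rcases N with _ | N
  · simp
  rw [sum_range_succ', sum_congr rfl fun n _ ↦ sibuyaHalfCoeff_succ_eq_sub n,
    sum_range_sub' (fun n ↦ (n.centralBinom : ℝ) / 4 ^ n)]
  have : (0 : ℝ) ≤ N.centralBinom / 4 ^ N := by positivity
  simp only [Nat.centralBinom_zero, sibuyaHalfCoeff]
  norm_num
  linarith

lemma summable_sibuyaHalfCoeff : Summable sibuyaHalfCoeff :=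
  summable_of_sum_range_le sibuyaHalfCoeff_nonneg sum_range_sibuyaHalfCoeff_le_one

lemma sibuyaHalfCoeff_le_four_mul_succ {n : ℕ} (hn : n ≠ 0) :
    sibuyaHalfCoeff n ≤ 4 * sibuyaHalfCoeff (n + 1) := by
  obtain ⟨m, rfl⟩ := Nat.exists_eq_succ_of_ne_zero hn
  have hc : (catalan m : ℝ) ≤ catalan (m + 1) := by exact_mod_cast catalan_le_catalan_succ m
  simp only [sibuyaHalfCoeff, pow_succ]
  rw [← mul_div_assoc, div_le_div_iff₀ (by positivity) (by positivity)]
  have : (0 : ℝ) < 4 ^ m := by positivity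
  nlinarith

lemma sum_antidiagonal_sibuyaHalfCoeff (N : ℕ) :
    ∑ ij ∈ antidiagonal N, sibuyaHalfCoeff ij.1 * sibuyaHalfCoeff ij.2 =
      2 * sibuyaHalfCoeff N - if N = 1 then 1 else 0 := by
  match N with
  | 0 => simp [sibuyaHalfCoeff]
  | 1 => simp [Nat.sum_antidiagonal_succ, sibuyaHalfCoeff]
  | m + 2 =>
    rw [Nat.sum_antidiagonal_succ, Nat.sum_antidiagonal_succ']
    have hcat : ((catalan (m + 1) : ℕ) : ℝ) = ∑ ij ∈ antidiagonal m,
        (catalan ij.1 : ℝ) * catalan ij.2 := by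
      rw [catalan_succ']; push_cast; rfl
    have hterm : ∀ ij ∈ antidiagonal m,
        sibuyaHalfCoeff (ij.1 + 1) * sibuyaHalfCoeff (ij.2 + 1) =
          (catalan ij.1 : ℝ) * catalan ij.2 / (4 * 4 ^ m) := by
      intro ij hij
      rw [← mem_antidiagonal.mp hij, pow_add]
      simp only [sibuyaHalfCoeff]
      field_simp
      ring
    rw [sum_congr rfl hterm, ← sum_div, ← hcat]
    simp only [sibuyaHalfCoeff, if_neg (show m + 2 ≠ 1 by omega)]
    rw [pow_succ]
    field_simp
    ring

section SibuyaHalfPGF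

variable {s : ℝ}

lemma summable_sibuyaHalfCoeff_mul_pow (hs : s ∈ Icc (0:ℝ) 1) :
    Summable fun n ↦ sibuyaHalfCoeff n * s ^ n :=
  summable_mul_pow_of_nonneg sibuyaHalfCoeff_nonneg summable_sibuyaHalfCoeff hs

lemma tsum_sibuyaHalfCoeff_mul_pow_sq (hs : s ∈ Icc (0:ℝ) 1) :
    (∑' n, sibuyaHalfCoeff n * s ^ n) ^ 2 = 2 * ∑' n, sibuyaHalfCoeff n * s ^ n - s := by
  have hsum := summable_sibuyaHalfCoeff_mul_pow hs
  have hnorm : Summable fun n ↦ ‖sibuyaHalfCoeff n * s ^ n‖ := hsum.norm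
  have hcoeff (N : ℕ) : ∑ ij ∈ antidiagonal N,
      sibuyaHalfCoeff ij.1 * s ^ ij.1 * (sibuyaHalfCoeff ij.2 * s ^ ij.2) =
        2 * (sibuyaHalfCoeff N * s ^ N) - if N = 1 then s else 0 := by
    have hterm : ∀ ij ∈ antidiagonal N,
        sibuyaHalfCoeff ij.1 * s ^ ij.1 * (sibuyaHalfCoeff ij.2 * s ^ ij.2) =
          sibuyaHalfCoeff ij.1 * sibuyaHalfCoeff ij.2 * s ^ N := by
      intro ij hij
      rw [← mem_antidiagonal.mp hij, pow_add]
      ring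
    rw [sum_congr rfl hterm, ← sum_mul, sum_antidiagonal_sibuyaHalfCoeff]
    split_ifs with h
    · subst h; ring
    · ring
  rw [sq, tsum_mul_tsum_eq_tsum_sum_antidiagonal_of_summable_norm hnorm hnorm,
    tsum_congr hcoeff, (hsum.mul_left 2).tsum_sub (hasSum_ite_eq 1 s).summable,
    tsum_mul_left, tsum_ite_eq]

lemma tsum_sibuyaHalfCoeff_mul_pow (hs : s ∈ Icc (0:ℝ) 1) :
    ∑' n, sibuyaHalfCoeff n * s ^ n = 1 - √(1 - s) := by
  set F := ∑' n, sibuyaHalfCoeff n * s ^ n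
  have hF : F ≤ 1 := by
    refine Real.tsum_le_of_sum_range_le
      (fun n ↦ mul_nonneg (sibuyaHalfCoeff_nonneg n) (pow_nonneg hs.1 n)) fun N ↦ ?_
    refine (sum_le_sum fun n _ ↦ ?_).trans (sum_range_sibuyaHalfCoeff_le_one N)
    exact mul_le_of_le_one_right (sibuyaHalfCoeff_nonneg n) (pow_le_one₀ hs.1 hs.2)
  have hsq : (1 - F) ^ 2 = 1 - s := by nlinarith [tsum_sibuyaHalfCoeff_mul_pow_sq hs]
  rw [← hsq, Real.sqrt_sq (by linarith)]
  ring

lemma isPGF_one_sub_sqrt_one_sub : IsPGF fun s ↦ 1 - √(1 - s) :=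
  isPGF_of_tsum_mul_pow_eq sibuyaHalfCoeff_nonneg (fun _ hs ↦ tsum_sibuyaHalfCoeff_mul_pow hs)
    (by simp)

end SibuyaHalfPGF

noncomputable def sibuyaHalfCoeffAddHalfX (n : ℕ) : ℝ :=
  sibuyaHalfCoeff n + if n = 1 then 1 / 2 else 0

lemma sibuyaHalfCoeffAddHalfX_nonneg (n : ℕ) : 0 ≤ sibuyaHalfCoeffAddHalfX n :=
  add_nonneg (sibuyaHalfCoeff_nonneg n) (by split_ifs <;> norm_num)

lemma sibuyaHalfCoeffAddHalfX_le_eight_mul_succ (n : ℕ) :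
    sibuyaHalfCoeffAddHalfX n ≤ 8 * sibuyaHalfCoeffAddHalfX (n + 1) := by
  match n with
  | 0 => simp [sibuyaHalfCoeffAddHalfX, sibuyaHalfCoeff]
  | 1 => simp [sibuyaHalfCoeffAddHalfX, sibuyaHalfCoeff]; norm_num
  | m + 2 =>
    have := sibuyaHalfCoeff_le_four_mul_succ (n := m + 2) (by omega)
    have := sibuyaHalfCoeff_nonneg (m + 3)
    simp only [sibuyaHalfCoeffAddHalfX, if_neg (show m + 2 ≠ 1 by omega),
      if_neg (show m + 2 + 1 ≠ 1 by omega)]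
    linarith

lemma summable_sibuyaHalfCoeffAddHalfX : Summable sibuyaHalfCoeffAddHalfX :=
  summable_sibuyaHalfCoeff.add (hasSum_ite_eq 1 _).summable

lemma tsum_sibuyaHalfCoeffAddHalfX_mul_pow {s : ℝ} (hs : s ∈ Icc (0:ℝ) 1) :
    ∑' n, sibuyaHalfCoeffAddHalfX n * s ^ n = 1 - √(1 - s) + s / 2 := by
  have hsplit (n : ℕ) : sibuyaHalfCoeffAddHalfX n * s ^ n =
      sibuyaHalfCoeff n * s ^ n + if n = 1 then s / 2 else 0 := by
    split_ifs with h <;> simp [sibuyaHalfCoeffAddHalfX, h]; ring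
  rw [tsum_congr hsplit,
    (summable_sibuyaHalfCoeff_mul_pow hs).tsum_add (hasSum_ite_eq 1 _).summable,
    tsum_sibuyaHalfCoeff_mul_pow hs, tsum_ite_eq]

noncomputable def sibuyaHalfFactorCoeff (n : ℕ) : ℝ :=
  3 / 4 * divOneAddMulX (1 / 8) sibuyaHalfCoeffAddHalfX n

lemma divOneAddMulX_sibuyaHalfCoeffAddHalfX_mem_Icc (n : ℕ) :
    divOneAddMulX (1 / 8) sibuyaHalfCoeffAddHalfX n ∈ Icc 0 (sibuyaHalfCoeffAddHalfX n) :=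
  divOneAddMulX_mem_Icc (by norm_num) sibuyaHalfCoeffAddHalfX_nonneg
    (fun n ↦ by linarith [sibuyaHalfCoeffAddHalfX_le_eight_mul_succ n]) n

lemma isPGF_one_sub_sqrt_div_one_sub_sqrt_div_three :
    IsPGF fun s ↦ (1 - √(1 - s)) / (1 - √(1 - s) / 3) := by
  have hq := divOneAddMulX_sibuyaHalfCoeffAddHalfX_mem_Icc
  refine isPGF_of_tsum_mul_pow_eq (p := sibuyaHalfFactorCoeff)
    (fun n ↦ mul_nonneg (by norm_num) (hq n).1) (fun s hs ↦ ?_) (by norm_num)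
  have hgen := one_add_mul_mul_tsum_divOneAddMulX (t := 1 / 8)
    (summable_mul_pow_of_nonneg (fun n ↦ (hq n).1)
      (summable_sibuyaHalfCoeffAddHalfX.of_nonneg_of_le (fun n ↦ (hq n).1) fun n ↦ (hq n).2) hs)
    (summable_mul_pow_of_nonneg sibuyaHalfCoeffAddHalfX_nonneg
      summable_sibuyaHalfCoeffAddHalfX hs)
  rw [tsum_sibuyaHalfCoeffAddHalfX_mul_pow hs] at hgen
  have hu : √(1 - s) ^ 2 = 1 - s := Real.sq_sqrt (by linarith [hs.2])
  have hu1 : √(1 - s) ≤ 1 := Real.sqrt_le_one.mpr (by linarith [hs.1])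
  simp only [sibuyaHalfFactorCoeff, mul_assoc, tsum_mul_left]
  rw [eq_div_iff (by linarith),
    ← mul_left_cancel_iff_of_pos (a := 1 + 1 / 8 * s) (by linarith [hs.1])]
  linear_combination (3 / 4 * (1 - √(1 - s) / 3)) * hgen + 1 / 4 * hu

/-- There are a PGF `P`, a constant `c ∈ (0,1)` and a PGF `P₀` with
`P(s) = P(1-c+cs)·P₀(s)` on `(0,1)`, yet the distribution with PGF `P` is not
infinitely divisible. -/
theorem stmt13 :
    ∃ (Pf P₀ : ℝ → ℝ) (c : ℝ), IsPGF Pf ∧ IsPGF P₀ ∧ 0 < c ∧ c < 1 ∧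
      (∀ s ∈ Ioo (0:ℝ) 1, Pf s = Pf (1 - c + c * s) * P₀ s) ∧ ¬ IsIDPGF Pf := by
  refine ⟨fun s ↦ 1 - √(1 - s), fun s ↦ (1 - √(1 - s)) / (1 - √(1 - s) / 3), 1 / 9,
    isPGF_one_sub_sqrt_one_sub, isPGF_one_sub_sqrt_div_one_sub_sqrt_div_three,
    by norm_num, by norm_num, fun s hs ↦ ?_, fun hID ↦ ?_⟩
  · have hu : √(1 - s) ≤ 1 := Real.sqrt_le_one.mpr (by linarith [hs.1])
    have hc : √(1 - (1 - 1 / 9 + 1 / 9 * s)) = √(1 - s) / 3 := by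
      rw [show 1 - (1 - 1 / 9 + 1 / 9 * s) = (1 - s) / 3 ^ 2 by ring,
        Real.sqrt_div' _ (by norm_num), Real.sqrt_sq (by norm_num)]
    simp only [hc]
    rw [mul_div_cancel₀ _ (by linarith)]
  · have h := hID.eq_zero_of_map_zero (by simp) (s := 1 / 2) ⟨by norm_num, by norm_num⟩
    norm_num [sub_eq_zero, eq_comm (a := (1 : ℝ)), Real.sqrt_eq_one] at h
end
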